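/- The field L = ℚ(ζ, w) is a splitting field of X^{p^n} − a over ℚ, with [L : ℚ] = p^n·φ(p^n) = p^{2n−1}(p−1), [ℚ(w) : ℚ] = p^n, and ℚ(w) ∩ ℚ(ζ) = ℚ; consequently L is the normal closure of ℚ(w)/ℚ inside ℂ. -/

import Mathlib

/-!
Every root of `X^{p^n} - a` in `ℂ` is `ζ^i w`, so `L = ℚ(ζ, w)` is its splitting field and hence
also the normal closure of `ℚ(w)`. The degrees come from irreducibility of `X^{p^n} - a`, first
over `ℚ` and then over `ℚ(ζ)`; for the latter it suffices that `a` is not a `p`-th power in `ℚ(ζ)`.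
If it were, `E = ℚ(a^{1/p})` would be a subfield of the abelian extension `ℚ(ζ)/ℚ`, hence normal,
so it would contain all `p`-th roots of `a` and with them a primitive `p`-th root of unity `μ`;
but `[ℚ(μ) : ℚ] = p - 1` does not divide `[E : ℚ] = p` when `p` is odd. The tower law then gives
`[L : ℚ] = [ℚ(w) : ℚ] [ℚ(ζ) : ℚ]`, so `ℚ(w)` and `ℚ(ζ)` are linearly disjoint and meet in `ℚ`.
-/

open Polynomial IntermediateField

section FieldTheory

variable {F K : Type*} [Field F] [Field K] [Algebra F K]

lemma mem_rootSet_X_pow_sub_C {N : ℕ} [NeZero N] {a : F} {x : K} :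
    x ∈ (X ^ N - C a).rootSet K ↔ x ^ N = algebraMap F K a := by
  rw [mem_rootSet_of_ne (X_pow_sub_C_ne_zero (Nat.pos_of_neZero N) a)]
  simp [sub_eq_zero]

lemma minpoly_eq_X_pow_sub_C {N : ℕ} [NeZero N] {a : F} (hirr : Irreducible (X ^ N - C a))
    {w : K} (hw : w ^ N = algebraMap F K a) : minpoly F w = X ^ N - C a :=
  (minpoly.eq_of_irreducible_of_monic hirr (by simp [hw]) (monic_X_pow_sub_C a (NeZero.ne N))).symm

lemma finrank_adjoin_simple_of_irreducible_X_pow_sub_C {N : ℕ} [NeZero N] {a : F}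
    (hirr : Irreducible (X ^ N - C a)) {w : K} (hw : w ^ N = algebraMap F K a) :
    Module.finrank F F⟮w⟯ = N := by
  have hint : IsIntegral F w := .of_pow (Nat.pos_of_neZero N) (hw ▸ isIntegral_algebraMap)
  rw [adjoin.finrank hint, minpoly_eq_X_pow_sub_C hirr hw, natDegree_X_pow_sub_C]

lemma adjoin_rootSet_X_pow_sub_C {N : ℕ} [NeZero N] {ζ w : K} (hζ : IsPrimitiveRoot ζ N)
    {a : F} (hw : w ^ N = algebraMap F K a) (hw0 : w ≠ 0) :
    adjoin F ((X ^ N - C a).rootSet K) = adjoin F {ζ, w} := by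
  have hwmem : w ∈ adjoin F ((X ^ N - C a).rootSet K) :=
    subset_adjoin F _ (mem_rootSet_X_pow_sub_C.2 hw)
  have hζwmem : ζ * w ∈ adjoin F ((X ^ N - C a).rootSet K) :=
    subset_adjoin F _ (mem_rootSet_X_pow_sub_C.2 (by rw [mul_pow, hζ.pow_eq_one, one_mul, hw]))
  apply le_antisymm
  · refine adjoin_le_iff.2 fun x hx ↦ ?_
    rw [mem_rootSet_X_pow_sub_C] at hx
    obtain ⟨i, -, hi⟩ := hζ.eq_pow_of_pow_eq_one (ξ := x / w)
      (by rw [div_pow, hx, ← hw, div_self (pow_ne_zero N hw0)])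
    rw [eq_div_iff hw0] at hi
    rw [← hi]
    exact mul_mem (pow_mem (subset_adjoin F _ (Set.mem_insert _ _)) i)
      (subset_adjoin F _ (Set.mem_insert_of_mem _ rfl))
  · rw [adjoin_le_iff, Set.insert_subset_iff, Set.singleton_subset_iff]
    exact ⟨by simpa [hw0] using div_mem hζwmem hwmem, hwmem⟩

lemma finrank_adjoin_pair (x y : K) :
    Module.finrank F (adjoin F {x, y}) = Module.finrank F F⟮x⟯ * Module.finrank F⟮x⟯ F⟮x⟯⟮y⟯ := by
  rw [Module.finrank_mul_finrank, ← Set.singleton_union, ← adjoin_adjoin_left]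
  rfl

lemma IntermediateField.mem_of_aeval_minpoly_eq_zero {E : IntermediateField F K} [Normal F E]
    {x y : K} (hx : x ∈ E) (hy : aeval y (minpoly F x) = 0) : y ∈ E := by
  have hsplit := Normal.splits' (F := F) (⟨x, hx⟩ : E)
  have hne := minpoly.ne_zero (Normal.isIntegral (F := F) inferInstance (⟨x, hx⟩ : E))
  rw [minpoly_eq] at hsplit hne
  obtain ⟨z, rfl⟩ := hsplit.mem_range_of_isRoot (map_ne_zero hne) (i := algebraMap E K) (x := y)
    (by rwa [Polynomial.map_map, ← IsScalarTower.algebraMap_eq, IsRoot, eval_map_algebraMap])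
  exact z.2

lemma normalClosure_adjoin_simple [IsAlgClosed K] {x : K} (hx : IsIntegral F x) :
    normalClosure F F⟮x⟯ K = adjoin F ((minpoly F x).rootSet K) := by
  have : Algebra.IsAlgebraic F F⟮x⟯ := isAlgebraic_adjoin_simple hx
  have hxroot : x ∈ (minpoly F x).rootSet K :=
    mem_rootSet.2 ⟨minpoly.ne_zero hx, minpoly.aeval F x⟩
  apply le_antisymm
  · have : Normal F (adjoin F ((minpoly F x).rootSet K)) :=
      Normal.of_isSplittingField (minpoly F x)
        (hFEp := adjoin_rootSet_isSplittingField (IsAlgClosed.splits _))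
    refine Algebra.IsAlgebraic.normalClosure_le_iSup_adjoin.trans
      (iSup_le fun y ↦ adjoin_le_iff.2 fun z hz ↦ ?_)
    have hy : (y : K) ∈ adjoin F ((minpoly F x).rootSet K) :=
      adjoin_simple_le_iff.2 (subset_adjoin F _ hxroot) y.2
    rw [minpoly_eq, mem_rootSet] at hz
    exact mem_of_aeval_minpoly_eq_zero hy hz.2
  · rw [Algebra.IsAlgebraic.normalClosure_eq_iSup_adjoin_of_splits (fun _ ↦ IsAlgClosed.splits _)]
    exact le_iSup_of_le ⟨x, mem_adjoin_simple_self F x⟩ (by rw [minpoly_eq])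

lemma isAbelianGalois_adjoin_of_isPrimitiveRoot {N : ℕ} [NeZero N] {ζ : K}
    (hζ : IsPrimitiveRoot ζ N) : IsAbelianGalois F F⟮ζ⟯ := by
  have : IsCyclotomicExtension {N} F F⟮ζ⟯ := by
    change IsCyclotomicExtension {N} F (adjoin F {ζ}).toSubalgebra
    rw [adjoin_simple_toSubalgebra_of_isAlgebraic
      (hζ.isIntegral (Nat.pos_of_neZero N)).tower_top.isAlgebraic]
    exact hζ.adjoin_isCyclotomicExtension F
  exact IsCyclotomicExtension.isAbelianGalois {N} F F⟮ζ⟯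

end FieldTheory

lemma finrank_adjoin_isPrimitiveRoot_rat {K : Type*} [Field K] [CharZero K] {N : ℕ} [NeZero N]
    {ζ : K} (hζ : IsPrimitiveRoot ζ N) : Module.finrank ℚ ℚ⟮ζ⟯ = N.totient := by
  rw [adjoin.finrank (hζ.isIntegral (Nat.pos_of_neZero N)).tower_top,
    ← cyclotomic_eq_minpoly_rat hζ (Nat.pos_of_neZero N), natDegree_cyclotomic]

lemma pow_ne_algebraMap_of_isAbelianGalois {K : Type*} [Field K] [Algebra ℚ K]
    [IsAbelianGalois ℚ K] {p : ℕ} (hp : p.Prime) (hp2 : p ≠ 2) {μ : K}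
    (hμ : IsPrimitiveRoot μ p) {a : ℚ} (hpow : ∀ b : ℚ, b ^ p ≠ a) (u : K) :
    u ^ p ≠ algebraMap ℚ K a := by
  intro hu
  have : NeZero p := ⟨hp.ne_zero⟩
  have hirr := X_pow_sub_C_irreducible_of_prime hp hpow
  have hu0 : u ≠ 0 := by
    rintro rfl
    exact hpow 0 ((algebraMap ℚ K).injective (by simpa [hp.ne_zero] using hu))
  have huμ : u * μ ∈ ℚ⟮u⟯ := by
    refine mem_of_aeval_minpoly_eq_zero (mem_adjoin_simple_self ℚ u) ?_
    simp [minpoly_eq_X_pow_sub_C hirr hu, mul_pow, hμ.pow_eq_one, hu]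
  have hμu : μ ∈ ℚ⟮u⟯ := by simpa [hu0] using div_mem huμ (mem_adjoin_simple_self ℚ u)
  have : CharZero K := charZero_of_injective_algebraMap (algebraMap ℚ K).injective
  -- `finrank_adjoin_isPrimitiveRoot_rat` is stated for the canonical `ℚ`-algebra structure.
  obtain rfl : ‹Algebra ℚ K› = DivisionRing.toRatAlgebra := Subsingleton.elim _ _
  have hdvd : p - 1 ∣ p := by
    simpa [finrank_adjoin_isPrimitiveRoot_rat hμ, Nat.totient_prime hp,
      finrank_adjoin_simple_of_irreducible_X_pow_sub_C hirr hu]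
      using finrank_dvd_of_le_right (adjoin_simple_le_iff.2 hμu)
  have := hp.two_le
  rcases hp.eq_one_or_self_of_dvd _ hdvd with h | h <;> omega

section Rational

variable {K : Type*} [Field K] [CharZero K] {p n : ℕ}

lemma irreducible_X_pow_sub_C_over_adjoin_isPrimitiveRoot (hp : p.Prime) (hp2 : p ≠ 2)
    (hn : 1 ≤ n) {ζ : K} (hζ : IsPrimitiveRoot ζ (p ^ n)) {a : ℚ} (hpow : ∀ b : ℚ, b ^ p ≠ a) :
    Irreducible (X ^ p ^ n - C (algebraMap ℚ ℚ⟮ζ⟯ a)) := by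
  have : NeZero (p ^ n) := ⟨pow_ne_zero n hp.ne_zero⟩
  have : IsAbelianGalois ℚ ℚ⟮ζ⟯ := isAbelianGalois_adjoin_of_isPrimitiveRoot hζ
  have hμ : IsPrimitiveRoot ((⟨ζ, mem_adjoin_simple_self ℚ ζ⟩ : ℚ⟮ζ⟯) ^ p ^ (n - 1)) p :=
    (IsPrimitiveRoot.coe_submonoidClass_iff.mp hζ).pow (Nat.pos_of_neZero _)
      (by rw [← pow_succ, Nat.sub_add_cancel hn])
  exact X_pow_sub_C_irreducible_of_prime_pow hp hp2 n
    (pow_ne_algebraMap_of_isAbelianGalois hp hp2 hμ hpow)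

lemma finrank_adjoin_isPrimitiveRoot_pair (hp : p.Prime) (hp2 : p ≠ 2) (hn : 1 ≤ n) {ζ w : K}
    (hζ : IsPrimitiveRoot ζ (p ^ n)) {a : ℚ} (hpow : ∀ b : ℚ, b ^ p ≠ a)
    (hw : w ^ p ^ n = algebraMap ℚ K a) :
    Module.finrank ℚ (adjoin ℚ {ζ, w}) = p ^ n * (p ^ n).totient := by
  have : NeZero (p ^ n) := ⟨pow_ne_zero n hp.ne_zero⟩
  rw [finrank_adjoin_pair, finrank_adjoin_isPrimitiveRoot_rat hζ,
    finrank_adjoin_simple_of_irreducible_X_pow_sub_C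
      (irreducible_X_pow_sub_C_over_adjoin_isPrimitiveRoot hp hp2 hn hζ hpow) hw, mul_comm]

end Rational

lemma Nat.pow_mul_totient_prime_pow {p n : ℕ} (hp : p.Prime) (hn : 1 ≤ n) :
    p ^ n * (p ^ n).totient = p ^ (2 * n - 1) * (p - 1) := by
  rw [Nat.totient_prime_pow hp (by omega), ← mul_assoc, ← pow_add]
  congr 2
  omega

theorem stmt_19_general (p n : ℕ) (hp : p.Prime) (hp2 : p ≠ 2) (hn : 1 ≤ n)
    (a : ℚ) (hpow : ∀ b : ℚ, b ^ p ≠ a)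
    (w : ℝ) (hw : 0 < w) (hwa : w ^ (p ^ n) = (a : ℝ))
    (ζ : ℂ) (hζ : IsPrimitiveRoot ζ (p ^ n)) :
    Polynomial.IsSplittingField ℚ ↥(IntermediateField.adjoin ℚ {ζ, (w : ℂ)})
      (Polynomial.X ^ (p ^ n) - Polynomial.C a) ∧
    Module.finrank ℚ ↥(IntermediateField.adjoin ℚ {ζ, (w : ℂ)}) =
      p ^ n * Nat.totient (p ^ n) ∧
    p ^ n * Nat.totient (p ^ n) = p ^ (2 * n - 1) * (p - 1) ∧
    Module.finrank ℚ ↥(IntermediateField.adjoin ℚ {(w : ℂ)}) = p ^ n ∧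
    IntermediateField.adjoin ℚ {(w : ℂ)} ⊓ IntermediateField.adjoin ℚ {ζ} = ⊥ ∧
    IntermediateField.normalClosure ℚ ↥(IntermediateField.adjoin ℚ {(w : ℂ)}) ℂ =
      IntermediateField.adjoin ℚ {ζ, (w : ℂ)} := by
  have : NeZero (p ^ n) := ⟨pow_ne_zero n hp.ne_zero⟩
  have hwa' : (w : ℂ) ^ p ^ n = algebraMap ℚ ℂ a := by
    rw [eq_ratCast]
    exact_mod_cast hwa
  have hwint : IsIntegral ℚ (w : ℂ) := .of_pow (Nat.pos_of_neZero _) (hwa' ▸ isIntegral_algebraMap)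
  have hirr : Irreducible (X ^ p ^ n - C a) := X_pow_sub_C_irreducible_of_prime_pow hp hp2 n hpow
  have hroots := adjoin_rootSet_X_pow_sub_C hζ hwa' (by exact_mod_cast hw.ne')
  have hdeg := finrank_adjoin_isPrimitiveRoot_pair hp hp2 hn hζ hpow hwa'
  have hdegw := finrank_adjoin_simple_of_irreducible_X_pow_sub_C hirr hwa'
  have : FiniteDimensional ℚ ℚ⟮(w : ℂ)⟯ := adjoin.finiteDimensional hwint
  have : FiniteDimensional ℚ ℚ⟮ζ⟯ :=
    adjoin.finiteDimensional (hζ.isIntegral (Nat.pos_of_neZero _)).tower_top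
  have hsup : ℚ⟮(w : ℂ)⟯ ⊔ ℚ⟮ζ⟯ = adjoin ℚ {ζ, (w : ℂ)} := by
    rw [← adjoin_union, Set.union_comm, Set.singleton_union]
  refine ⟨hroots ▸ adjoin_rootSet_isSplittingField (IsAlgClosed.splits _), hdeg,
    Nat.pow_mul_totient_prime_pow hp hn, hdegw, ?_, ?_⟩
  · refine (LinearDisjoint.of_finrank_sup ?_).inf_eq_bot
    rw [hsup, hdeg, hdegw, finrank_adjoin_isPrimitiveRoot_rat hζ]
  · refine (normalClosure_adjoin_simple hwint).trans ?_
    rw [minpoly_eq_X_pow_sub_C hirr hwa', hroots]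

/-- `L = ℚ(ζ, w)` is a splitting field of `X^{p^n} − a` over ℚ, with
`[L : ℚ] = p^n·φ(p^n) = p^{2n−1}(p−1)`, `[ℚ(w) : ℚ] = p^n` and `ℚ(w) ∩ ℚ(ζ) = ℚ`;
consequently `L` is the normal closure of `ℚ(w)/ℚ` inside `ℂ`. -/
theorem stmt_19 (p n : ℕ) (hp : p.Prime) (hp2 : p ≠ 2) (hn : 1 ≤ n)
    (a : ℚ) (ha : 0 < a) (hpow : ∀ b : ℚ, b ^ p ≠ a)
    (w : ℝ) (hw : 0 < w) (hwa : w ^ (p ^ n) = (a : ℝ))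
    (ζ : ℂ) (hζ : IsPrimitiveRoot ζ (p ^ n)) :
    Polynomial.IsSplittingField ℚ ↥(IntermediateField.adjoin ℚ {ζ, (w : ℂ)})
      (Polynomial.X ^ (p ^ n) - Polynomial.C a) ∧
    Module.finrank ℚ ↥(IntermediateField.adjoin ℚ {ζ, (w : ℂ)}) =
      p ^ n * Nat.totient (p ^ n) ∧
    p ^ n * Nat.totient (p ^ n) = p ^ (2 * n - 1) * (p - 1) ∧
    Module.finrank ℚ ↥(IntermediateField.adjoin ℚ {(w : ℂ)}) = p ^ n ∧
    IntermediateField.adjoin ℚ {(w : ℂ)} ⊓ IntermediateField.adjoin ℚ {ζ} = ⊥ ∧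
    IntermediateField.normalClosure ℚ ↥(IntermediateField.adjoin ℚ {(w : ℂ)}) ℂ =
      IntermediateField.adjoin ℚ {ζ, (w : ℂ)} :=
  stmt_19_general p n hp hp2 hn a hpow w hw hwa ζ hζ
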